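/- arXiv:2107.07792 — 2 statements merged into one kernel-verified Lean document; each statement's English description precedes it below -/
import Mathlib

section
/- Let Q be a line segment (a curve t ↦ (1−t)a + tb) and P a polygonal curve with d_F(P,Q) ≤ δ. Let P' be the polygonal curve formed from any subsequence of the vertex sequence of P that includes the first and last vertex of P. Then d_F(P', Q) ≤ δ. -/
/-- Continuous Fréchet distance between curves on the unit interval. -/
noncomputable def frechetDist {E : Type*} [PseudoMetricSpace E] (P Q : unitInterval → E) : ℝ :=
  sInf {r : ℝ | ∃ f g : unitInterval → unitInterval,
    Continuous f ∧ Monotone f ∧ Function.Surjective f ∧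
    Continuous g ∧ Monotone g ∧ Function.Surjective g ∧
    ∀ t, dist (P (f t)) (Q (g t)) ≤ r}

/-- The directed line segment from `a` to `b`, parametrized linearly. -/
noncomputable def segCurve {E : Type*} [AddCommGroup E] [Module ℝ E] (a b : E) :
    unitInterval → E :=
  fun t => (1 - (t : ℝ)) • a + (t : ℝ) • b

/-- The polygonal curve with `n+1` vertices `p 0, …, p n`, parametrized uniformly. -/
noncomputable def polyCurve {E : Type*} [AddCommGroup E] [Module ℝ E]
    (n : ℕ) (p : Fin (n + 1) → E) (t : unitInterval) : E :=
  let x : ℝ := (t : ℝ) * n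
  let i : ℕ := min (Nat.floor x) (n - 1)
  (1 - (x - (i : ℝ))) • p ⟨min i n, Nat.lt_succ_of_le (min_le_right i n)⟩ +
    (x - (i : ℝ)) • p ⟨min (i + 1) n, Nat.lt_succ_of_le (min_le_right (i + 1) n)⟩

/-- The subcurve `Q[a,b]`, linearly reparametrized over the unit interval. -/
noncomputable def subcurve {E : Type*} (Q : unitInterval → E) (a b : unitInterval) :
    unitInterval → E :=
  fun s => Q ⟨(1 - (s : ℝ)) * (a : ℝ) + (s : ℝ) * (b : ℝ), Set.mem_Icc.mpr ⟨by
      have hs0 := unitInterval.nonneg s; have hs1 := unitInterval.le_one s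
      have ha0 := unitInterval.nonneg a; have hb0 := unitInterval.nonneg b
      have h1 : (0:ℝ) ≤ (1 - (s:ℝ)) * (a:ℝ) := mul_nonneg (by linarith) ha0
      have h2 : (0:ℝ) ≤ (s:ℝ) * (b:ℝ) := mul_nonneg hs0 hb0
      linarith, by
      have hs0 := unitInterval.nonneg s; have hs1 := unitInterval.le_one s
      have ha1 := unitInterval.le_one a; have hb1 := unitInterval.le_one b
      have h1 : (1 - (s:ℝ)) * (a:ℝ) ≤ (1 - (s:ℝ)) * 1 :=
        mul_le_mul_of_nonneg_left ha1 (by linarith)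
      have h2 : (s:ℝ) * (b:ℝ) ≤ (s:ℝ) * 1 := mul_le_mul_of_nonneg_left hb1 hs0
      linarith⟩⟩

/-- The parameter (in the uniform parametrization) of the `i`-th vertex of a
polygonal curve with `n` edges. -/
noncomputable def vparam (n : ℕ) (i : Fin (n + 1)) : unitInterval :=
  ⟨((i : ℕ) : ℝ) / (n : ℝ), Set.mem_Icc.mpr ⟨by positivity, by
    have h1 : ((i : ℕ) : ℝ) ≤ (n : ℝ) := by exact_mod_cast Nat.lt_succ_iff.mp i.isLt
    rcases Nat.eq_zero_or_pos n with h | h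
    · subst h; simp
    · rw [div_le_one (by exact_mod_cast h)]; exact h1⟩⟩

/-- `P` is `c`-monotone increasing. -/
def ApproxInc (c : ℝ) (P : unitInterval → ℝ) : Prop :=
  ∀ s t : unitInterval, s ≤ t → P s - c ≤ P t

/-- `P` is `c`-monotone decreasing. -/
def ApproxDec (c : ℝ) (P : unitInterval → ℝ) : Prop :=
  ∀ s t : unitInterval, s ≤ t → P t ≤ P s + c

/-- `P` is `c`-monotone. -/
def ApproxMono (c : ℝ) (P : unitInterval → ℝ) : Prop :=
  ApproxInc c P ∨ ApproxDec c P

/-- Concatenation of two curves (first on `[0,1/2]`, second on `[1/2,1]`). -/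
noncomputable def concatC {E : Type*} (P Q : unitInterval → E) : unitInterval → E :=
  fun t =>
    if h : (t : ℝ) ≤ 1 / 2 then
      P ⟨2 * (t : ℝ), Set.mem_Icc.mpr ⟨by have := unitInterval.nonneg t; linarith,
        by linarith⟩⟩
    else
      Q ⟨2 * (t : ℝ) - 1, Set.mem_Icc.mpr ⟨by push_neg at h; linarith,
        by have := unitInterval.le_one t; linarith⟩⟩

/-- The data of a `δ`-straightening of the curve `Q`: parameters
`0 = t 0 < … < t (Fin.last ℓ) = 1` such that each shortcut segment is within
Fréchet distance `δ` of the corresponding subcurve (locality), and each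
corresponding subcurve stays in the closed interval spanned by the shortcut's
endpoints (edge-range-preserving). -/
def StraighteningData (δ : ℝ) (Q : unitInterval → ℝ) (ℓ : ℕ)
    (t : Fin (ℓ + 1) → unitInterval) : Prop :=
  StrictMono t ∧ t 0 = 0 ∧ t (Fin.last ℓ) = 1 ∧
    ∀ i : Fin ℓ,
      frechetDist (segCurve (Q (t i.castSucc)) (Q (t i.succ)))
          (subcurve Q (t i.castSucc) (t i.succ)) ≤ δ ∧
      ∀ s : unitInterval, t i.castSucc ≤ s → s ≤ t i.succ →
        Q s ∈ Set.uIcc (Q (t i.castSucc)) (Q (t i.succ))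

/-- `Q'` is a `δ`-straightening of `Q`. -/
def IsStraightening (δ : ℝ) (Q Q' : unitInterval → ℝ) : Prop :=
  ∃ (ℓ : ℕ) (t : Fin (ℓ + 1) → unitInterval),
    StraighteningData δ Q ℓ t ∧ Q' = polyCurve ℓ (fun i => Q (t i))

/-- The data of a `δ`-signature of the curve `Q`: parameters
`0 = t 0 < … < t (Fin.last ℓ) = 1` with the locality property, non-degenerate
vertex-range-preserving interior vertices, and the `δ`-edge-length property. -/
def SignatureData (δ : ℝ) (Q : unitInterval → ℝ) (ℓ : ℕ)
    (t : Fin (ℓ + 1) → unitInterval) : Prop :=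
  StrictMono t ∧ t 0 = 0 ∧ t (Fin.last ℓ) = 1 ∧
    (∀ i : Fin ℓ,
      frechetDist (segCurve (Q (t i.castSucc)) (Q (t i.succ)))
          (subcurve Q (t i.castSucc) (t i.succ)) ≤ δ) ∧
    (∀ i : ℕ, ∀ _h1 : 0 < i, ∀ _h2 : i < ℓ,
      (Q (t ⟨i - 1, by omega⟩) < Q (t ⟨i, by omega⟩) ∧
        Q (t ⟨i + 1, by omega⟩) < Q (t ⟨i, by omega⟩) ∧
        ∀ s : unitInterval, t ⟨i - 1, by omega⟩ ≤ s → s ≤ t ⟨i + 1, by omega⟩ →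
          Q s ≤ Q (t ⟨i, by omega⟩)) ∨
      (Q (t ⟨i, by omega⟩) < Q (t ⟨i - 1, by omega⟩) ∧
        Q (t ⟨i, by omega⟩) < Q (t ⟨i + 1, by omega⟩) ∧
        ∀ s : unitInterval, t ⟨i - 1, by omega⟩ ≤ s → s ≤ t ⟨i + 1, by omega⟩ →
          Q (t ⟨i, by omega⟩) ≤ Q s)) ∧
    (∀ _h : 1 ≤ ℓ,
      δ < |Q (t ⟨1, by omega⟩) - Q (t 0)| ∧
      δ < |Q (t (Fin.last ℓ)) - Q (t ⟨ℓ - 1, by omega⟩)|) ∧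
    (∀ j : ℕ, ∀ _hj1 : 1 ≤ j, ∀ _hj2 : j + 2 ≤ ℓ,
      2 * δ < |Q (t ⟨j + 1, by omega⟩) - Q (t ⟨j, by omega⟩)|)

/-- `Q'` is a `δ`-signature of `Q`. -/
def IsSignature (δ : ℝ) (Q Q' : unitInterval → ℝ) : Prop :=
  ∃ (ℓ : ℕ) (t : Fin (ℓ + 1) → unitInterval),
    SignatureData δ Q ℓ t ∧ Q' = polyCurve ℓ (fun i => Q (t i))

/-- Vertex `j` of the polygonal curve on `q` `δ`-visits vertex `a` of the
polygonal curve on `p` under the monotone traversal `(f, g)`: they are within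
distance `δ`, and the traversal matches one of them to the other vertex or to the
interior of an edge incident to it. -/
def Visits (δ : ℝ) (m k : ℕ) (p : Fin (m + 1) → ℝ) (q : Fin (k + 1) → ℝ)
    (f g : unitInterval → unitInterval) (j : Fin (k + 1)) (a : Fin (m + 1)) : Prop :=
  |q j - p a| ≤ δ ∧
    ((∃ t : unitInterval, g t = vparam k j ∧ |(f t : ℝ) * (m : ℝ) - ((a : ℕ) : ℝ)| < 1) ∨
     (∃ t : unitInterval, f t = vparam m a ∧ |(g t : ℝ) * (k : ℝ) - ((j : ℕ) : ℝ)| < 1))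

/-!
Take a traversal `(f, g)` of width `r` of `P` and the segment `Q`. Every vertex of `P'` is a
vertex of `P`, hence of the form `P (f τ)`, and is within `r` of its partner `Q (g τ)`. Traverse
`P'` uniformly and `Q` through the piecewise-linear interpolation of these partner parameters.
Because `Q` is affine, on each edge of `P'` the point of `Q` is then the same convex combination
of the two partners as the point of `P'` is of the two vertices, so by convexity of balls the
width stays at most `r`.
-/

open Set unitInterval AffineMap

namespace PolyCurve

/-- The index `i` in the definition of `polyCurve n p t`. -/
noncomputable def edge (n : ℕ) (t : I) : ℕ := min ⌊(t : ℝ) * n⌋₊ (n - 1)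

theorem edge_le_and_le_edge_add_one (n : ℕ) (t : I) :
    (edge n t : ℝ) ≤ t * n ∧ (t : ℝ) * n ≤ edge n t + 1 := by
  have hx0 : (0 : ℝ) ≤ t * n := mul_nonneg t.2.1 n.cast_nonneg
  have hxn : (t : ℝ) * n ≤ n := mul_le_of_le_one_left n.cast_nonneg t.2.2
  rcases Nat.eq_zero_or_pos n with rfl | hn
  · simp [edge]
  by_cases hf : ⌊(t : ℝ) * n⌋₊ ≤ n - 1
  · rw [edge, min_eq_left hf]
    exact ⟨Nat.floor_le hx0, (Nat.lt_floor_add_one _).le⟩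
  · have hnx : (n : ℝ) ≤ t * n := (Nat.le_floor_iff hx0).mp (by omega)
    rw [edge, min_eq_right (by omega), Nat.cast_sub hn]
    constructor <;> push_cast <;> linarith

end PolyCurve

open PolyCurve

theorem vparam_zero (n : ℕ) : vparam n 0 = 0 := by
  ext; simp [vparam]

theorem vparam_last {n : ℕ} (hn : 0 < n) : vparam n (Fin.last n) = 1 := by
  ext; simp [vparam, hn.ne']

theorem monotone_vparam (n : ℕ) : Monotone (vparam n) := fun a b hab => by
  change (a : ℝ) / n ≤ (b : ℝ) / n
  gcongr
  exact_mod_cast hab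

variable {E F : Type*}

section Module

variable [AddCommGroup E] [Module ℝ E]

theorem polyCurve_eq_lineMap (n : ℕ) (p : Fin (n + 1) → E) (t : I) :
    polyCurve n p t =
      lineMap (p (Fin.clamp (edge n t) n)) (p (Fin.clamp (edge n t + 1) n))
        ((t : ℝ) * n - edge n t) := by
  rw [lineMap_apply_module]; rfl

theorem polyCurve_mem {s : Set E} (hs : Convex ℝ s) (n : ℕ) {p : Fin (n + 1) → E}
    (hp : ∀ i, p i ∈ s) (t : I) : polyCurve n p t ∈ s := by
  obtain ⟨h₁, h₂⟩ := edge_le_and_le_edge_add_one n t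
  rw [polyCurve_eq_lineMap]
  exact hs.lineMap_mem (hp _) (hp _) ⟨by linarith, by linarith⟩

theorem AffineMap.map_polyCurve [AddCommGroup F] [Module ℝ F] (φ : E →ᵃ[ℝ] F) (n : ℕ)
    (p : Fin (n + 1) → E) (t : I) : φ (polyCurve n p t) = polyCurve n (φ ∘ p) t := by
  simp only [polyCurve_eq_lineMap, φ.apply_lineMap, Function.comp_apply]

theorem polyCurve_sub (n : ℕ) (p q : Fin (n + 1) → E) (t : I) :
    polyCurve n (p - q) t = polyCurve n p t - polyCurve n q t := by
  simp only [polyCurve_eq_lineMap, lineMap_apply_module, Pi.sub_apply]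
  module

theorem polyCurve_const (n : ℕ) (x : E) : polyCurve n (fun _ => x) = fun _ => x := by
  funext t
  simp only [polyCurve_eq_lineMap, lineMap_same_apply]

theorem polyCurve_zero (n : ℕ) (p : Fin (n + 1) → E) : polyCurve n p 0 = p 0 := by
  simp [polyCurve_eq_lineMap, edge]; rfl

theorem polyCurve_one (n : ℕ) (p : Fin (n + 1) → E) : polyCurve n p 1 = p (Fin.last n) := by
  rcases Nat.eq_zero_or_pos n with rfl | hn
  · simp [polyCurve_eq_lineMap, edge]; rfl
  · have he : edge n 1 = n - 1 := by simp [edge]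
    rw [polyCurve_eq_lineMap, he, Nat.sub_add_cancel hn, Nat.cast_sub hn]
    simpa using congrArg p (Fin.ext (by simp [Fin.clamp]))

theorem polyCurve_vparam (n : ℕ) (p : Fin (n + 1) → E) (a : Fin (n + 1)) :
    polyCurve n p (vparam n a) = p a := by
  rcases Nat.eq_zero_or_pos n with rfl | hn
  · rw [Fin.fin_one_eq_zero a, vparam_zero, polyCurve_zero]
  rcases (Fin.le_last a).lt_or_eq with ha | rfl
  · have hx : (vparam n a : ℝ) * n = a := div_mul_cancel₀ _ (by positivity)
    have he : edge n (vparam n a) = a := by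
      rw [edge, hx, Nat.floor_natCast, min_eq_left (by omega)]
    rw [polyCurve_eq_lineMap, he, hx, sub_self, lineMap_apply_zero]
    exact congrArg p (Fin.ext (min_eq_left a.is_le))
  · rw [vparam_last hn, polyCurve_one]

theorem polyCurve_eq_sum (n : ℕ) (p : Fin (n + 1) → E) (t : I) :
    polyCurve n p t = p 0 + ∑ j ∈ Finset.range n,
      (projIcc (0 : ℝ) 1 zero_le_one ((t : ℝ) * n - j) : ℝ) •
        (p (Fin.clamp (j + 1) n) - p (Fin.clamp j n)) := by
  obtain ⟨h₁, h₂⟩ := edge_le_and_le_edge_add_one n t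
  rcases Nat.eq_zero_or_pos n with rfl | hn
  · simp [polyCurve_eq_lineMap, edge]; rfl
  set i := edge n t
  have hi : i + 1 ≤ n := by have : i ≤ n - 1 := min_le_right _ _; omega
  have hzero : ∀ j ∈ Finset.range n, j ∉ Finset.range (i + 1) →
      (projIcc (0 : ℝ) 1 zero_le_one ((t : ℝ) * n - j) : ℝ) •
        (p (Fin.clamp (j + 1) n) - p (Fin.clamp j n)) = 0 := by
    intro j _ hj
    have : (i : ℝ) + 1 ≤ j := by exact_mod_cast not_lt.1 (Finset.mem_range.not.1 hj)
    simp [projIcc_of_le_left zero_le_one (by linarith : (t : ℝ) * n - j ≤ 0)]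
  have hone : ∀ j ∈ Finset.range i,
      (projIcc (0 : ℝ) 1 zero_le_one ((t : ℝ) * n - j) : ℝ) •
        (p (Fin.clamp (j + 1) n) - p (Fin.clamp j n)) =
        p (Fin.clamp (j + 1) n) - p (Fin.clamp j n) := by
    intro j hj
    have : (j : ℝ) + 1 ≤ i := by exact_mod_cast Finset.mem_range.1 hj
    simp [projIcc_of_right_le zero_le_one (by linarith : 1 ≤ (t : ℝ) * n - j)]
  rw [← Finset.sum_subset (Finset.range_subset_range.2 hi) hzero, Finset.sum_range_succ,
    Finset.sum_congr rfl hone, Finset.sum_range_sub (fun k => p (Fin.clamp k n)),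
    projIcc_of_mem zero_le_one ⟨by linarith, by linarith⟩, polyCurve_eq_lineMap,
    lineMap_apply_module]
  simp only [show Fin.clamp 0 n = 0 from rfl]
  module

theorem segCurve_eq_lineMap (a b : E) (t : I) : segCurve a b t = lineMap a b (t : ℝ) :=
  (lineMap_apply_module a b (t : ℝ)).symm

end Module

section Topology

variable [AddCommGroup E] [Module ℝ E] [TopologicalSpace E] [IsTopologicalAddGroup E]
  [ContinuousSMul ℝ E]

theorem continuous_polyCurve (n : ℕ) (p : Fin (n + 1) → E) : Continuous (polyCurve n p) := by
  rw [funext (polyCurve_eq_sum n p)]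
  fun_prop

theorem continuous_segCurve (a b : E) : Continuous (segCurve a b) := by
  unfold segCurve
  fun_prop

end Topology

theorem monotone_polyCurve {n : ℕ} {p : Fin (n + 1) → ℝ} (hp : Monotone p) :
    Monotone (polyCurve n p) := by
  intro s t hst
  simp only [polyCurve_eq_sum, smul_eq_mul]
  gcongr with j
  · exact sub_nonneg.2 (hp (Fin.mk_le_mk.2 (min_le_min_right n j.le_succ)))
  · exact monotone_projIcc _ (by gcongr)

theorem dist_polyCurve_le [SeminormedAddCommGroup E] [NormedSpace ℝ E] {n : ℕ}
    {p q : Fin (n + 1) → E} {r : ℝ} (h : ∀ i, dist (p i) (q i) ≤ r) (t : I) :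
    dist (polyCurve n p t) (polyCurve n q t) ≤ r := by
  rw [dist_eq_norm, ← polyCurve_sub, ← mem_closedBall_zero_iff]
  refine polyCurve_mem (convex_closedBall 0 r) n (fun i => ?_) t
  simpa [dist_eq_norm] using h i

noncomputable def polyReparam (n : ℕ) (c : Fin (n + 1) → I) (t : I) : I :=
  ⟨polyCurve n (fun i => (c i : ℝ)) t, polyCurve_mem (convex_Icc 0 1) n (fun i => (c i).2) t⟩

theorem continuous_polyReparam (n : ℕ) (c : Fin (n + 1) → I) :
    Continuous (polyReparam n c) :=
  (continuous_polyCurve n _).subtype_mk _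

theorem monotone_polyReparam {n : ℕ} {c : Fin (n + 1) → I} (hc : Monotone c) :
    Monotone (polyReparam n c) := fun _ _ hst =>
  Subtype.mk_le_mk.2 (monotone_polyCurve (fun _ _ hij => Subtype.coe_le_coe.2 (hc hij)) hst)

theorem surjective_polyReparam {n : ℕ} {c : Fin (n + 1) → I} (h0 : c 0 = 0)
    (h1 : c (Fin.last n) = 1) : Function.Surjective (polyReparam n c) := by
  have hG0 : polyReparam n c 0 = 0 := Subtype.ext <| by simp [polyReparam, polyCurve_zero, h0]
  have hG1 : polyReparam n c 1 = 1 := Subtype.ext <| by simp [polyReparam, polyCurve_one, h1]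
  intro y
  exact intermediate_value_univ 0 1 (continuous_polyReparam n c)
    ⟨hG0.trans_le nonneg', le_one'.trans_eq hG1.symm⟩

theorem segCurve_polyReparam [AddCommGroup E] [Module ℝ E] (a b : E) (n : ℕ)
    (c : Fin (n + 1) → I) (t : I) :
    segCurve a b (polyReparam n c t) = polyCurve n (fun i => segCurve a b (c i)) t := by
  simp only [segCurve_eq_lineMap]
  exact (lineMap a b : ℝ →ᵃ[ℝ] E).map_polyCurve n (fun i => (c i : ℝ)) t

namespace unitInterval

variable {f : I → I}

theorem map_zero_of_monotone_surjective (hf : Monotone f) (hfs : Function.Surjective f) :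
    f 0 = 0 := by
  obtain ⟨t, ht⟩ := hfs 0
  exact le_antisymm ((hf nonneg').trans_eq ht) nonneg'

theorem map_one_of_monotone_surjective (hf : Monotone f) (hfs : Function.Surjective f) :
    f 1 = 1 := by
  obtain ⟨t, ht⟩ := hfs 1
  exact le_antisymm le_one' (ht.symm.trans_le (hf le_one'))

theorem exists_strictMono_rightInverse (hf : Monotone f) (hfs : Function.Surjective f) :
    ∃ g : I → I, StrictMono g ∧ (∀ y, f (g y) = y) ∧ g 0 = 0 ∧ g 1 = 1 := by
  classical
  let g : I → I := fun y => if y = 0 then 0 else if y = 1 then 1 else Function.surjInv hfs y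
  have hg : ∀ y, f (g y) = y := by
    intro y
    by_cases h0 : y = 0
    · simp [g, h0, map_zero_of_monotone_surjective hf hfs]
    by_cases h1 : y = 1
    · simp [g, h1, map_one_of_monotone_surjective hf hfs]
    · simp [g, h0, h1, Function.surjInv_eq]
  refine ⟨g, fun x y hxy => lt_of_not_ge fun h => hxy.not_ge ?_, hg, by simp [g], by simp [g]⟩
  simpa only [hg] using hf h

end unitInterval

/-- `r` is an admissible width in the infimum defining `frechetDist P Q`. -/
def HasTraversalWithin [PseudoMetricSpace E] (P Q : I → E) (r : ℝ) : Prop :=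
  ∃ f g : I → I, Continuous f ∧ Monotone f ∧ Function.Surjective f ∧
    Continuous g ∧ Monotone g ∧ Function.Surjective g ∧ ∀ t, dist (P (f t)) (Q (g t)) ≤ r

section Traversal

variable [PseudoMetricSpace E] {P Q P' Q' : I → E}

theorem HasTraversalWithin.nonneg {r : ℝ} (h : HasTraversalWithin P Q r) : 0 ≤ r := by
  obtain ⟨f, g, -, -, -, -, -, -, hr⟩ := h
  exact dist_nonneg.trans (hr 0)

theorem exists_hasTraversalWithin (hP : Continuous P) (hQ : Continuous Q) :
    ∃ r, HasTraversalWithin P Q r := by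
  obtain ⟨r, hr⟩ := (isCompact_range (hP.dist hQ)).bddAbove
  exact ⟨r, id, id, continuous_id, monotone_id, Function.surjective_id, continuous_id,
    monotone_id, Function.surjective_id, fun t => hr ⟨t, rfl⟩⟩

theorem frechetDist_le_frechetDist_of_imp (hP : Continuous P) (hQ : Continuous Q)
    (h : ∀ r, HasTraversalWithin P Q r → HasTraversalWithin P' Q' r) :
    frechetDist P' Q' ≤ frechetDist P Q :=
  csInf_le_csInf ⟨0, fun _ hr => HasTraversalWithin.nonneg hr⟩ (exists_hasTraversalWithin hP hQ) h

end Traversal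

theorem HasTraversalWithin.shortcut [SeminormedAddCommGroup E] [NormedSpace ℝ E] {a b : E}
    {m m' : ℕ} {p : Fin (m + 1) → E} {s : Fin (m' + 1) → Fin (m + 1)} (hs : Monotone s)
    (h0 : s 0 = 0) (hl : s (Fin.last m') = Fin.last m) {r : ℝ}
    (h : HasTraversalWithin (polyCurve m p) (segCurve a b) r) :
    HasTraversalWithin (polyCurve m' (p ∘ s)) (segCurve a b) r := by
  rcases Nat.eq_zero_or_pos m with rfl | hm
  · have hp : p = fun _ => p 0 := funext fun i => congrArg p (Fin.fin_one_eq_zero i)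
    rwa [show p ∘ s = fun _ => p 0 by rw [hp]; rfl, polyCurve_const, ← polyCurve_const 0, ← hp]
  obtain ⟨f, g, -, hfm, hfs, -, hgm, hgs, hfg⟩ := h
  -- `τ 0 = 0` and `τ 1 = 1` make the new traversal of `Q` start at `0` and end at `1`.
  obtain ⟨τ, hτ, hfτ, hτ0, hτ1⟩ := exists_strictMono_rightInverse hfm hfs
  let c : Fin (m' + 1) → I := fun j => g (τ (vparam m (s j)))
  have hc : Monotone c := hgm.comp (hτ.monotone.comp ((monotone_vparam m).comp hs))
  have hc0 : c 0 = 0 := by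
    simp only [c, h0, vparam_zero, hτ0, map_zero_of_monotone_surjective hgm hgs]
  have hc1 : c (Fin.last m') = 1 := by
    simp only [c, hl, vparam_last hm, hτ1, map_one_of_monotone_surjective hgm hgs]
  refine ⟨id, polyReparam m' c, continuous_id, monotone_id, Function.surjective_id,
    continuous_polyReparam m' c, monotone_polyReparam hc, surjective_polyReparam hc0 hc1,
    fun t => ?_⟩
  rw [segCurve_polyReparam]
  refine dist_polyCurve_le (fun j => ?_) t
  simpa only [c, Function.comp_apply, hfτ, polyCurve_vparam] using hfg (τ (vparam m (s j)))

theorem frechetDist_shortcut_le_general {d : ℕ} (δ : ℝ)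
    (a b : EuclideanSpace ℝ (Fin d)) (m m' : ℕ)
    (p : Fin (m + 1) → EuclideanSpace ℝ (Fin d))
    (s : Fin (m' + 1) → Fin (m + 1)) (hs : StrictMono s)
    (h0 : s 0 = 0) (hl : s (Fin.last m') = Fin.last m)
    (hP : frechetDist (polyCurve m p) (segCurve a b) ≤ δ) :
    frechetDist (polyCurve m' (p ∘ s)) (segCurve a b) ≤ δ :=
  hP.trans' <| frechetDist_le_frechetDist_of_imp (continuous_polyCurve m p)
    (continuous_segCurve a b) fun _ => HasTraversalWithin.shortcut hs.monotone h0 hl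

/-- If a polygonal curve `P` is within Fréchet distance `δ` of a
segment `Q`, then so is any polygonal curve `P'` on a subsequence of the vertices
of `P` that includes the first and last vertex. -/
theorem frechetDist_shortcut_le {d : ℕ} (δ : ℝ) (hδ : 0 < δ)
    (a b : EuclideanSpace ℝ (Fin d)) (m m' : ℕ)
    (p : Fin (m + 1) → EuclideanSpace ℝ (Fin d))
    (s : Fin (m' + 1) → Fin (m + 1)) (hs : StrictMono s)
    (h0 : s 0 = 0) (hl : s (Fin.last m') = Fin.last m)
    (hP : frechetDist (polyCurve m p) (segCurve a b) ≤ δ) :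
    frechetDist (polyCurve m' (p ∘ s)) (segCurve a b) ≤ δ :=
  frechetDist_shortcut_le_general δ a b m m' p s hs h0 hl hP
end

section
/- Let δ > 0 and let P, Q : [0,1] → R be 2δ-monotone curves such that: (i) P is 2δ-monotone with respect to the directed segment from Q(0) to Q(1); (ii) |P(0) − Q(0)| ≤ δ and |P(1) − Q(1)| ≤ δ; (iii) every point of P is within distance δ of some point of Q; and (iv) every value of Q lies in the closed interval with endpoints Q(0) and Q(1). Then d_F(P,Q) ≤ δ. -/
open Set unitInterval

section Closure

variable {α : Type*} [TopologicalSpace α] [LinearOrder α] [OrderTopology α] [DenselyOrdered α]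
  {S : Set α} {a : α}

theorem IsClosed.mem_of_Iio_subset (hS : IsClosed S) (ha : (Iio a).Nonempty) (h : Iio a ⊆ S) :
    a ∈ S :=
  hS.closure_subset_iff.2 h (closure_Iio' ha ▸ self_mem_Iic)

theorem IsClosed.mem_of_Ioi_subset (hS : IsClosed S) (ha : (Ioi a).Nonempty) (h : Ioi a ⊆ S) :
    a ∈ S :=
  hS.closure_subset_iff.2 h (closure_Ioi' ha ▸ self_mem_Ici)

end Closure

def IsReparam (f : I → I) : Prop :=
  Continuous f ∧ Monotone f ∧ Function.Surjective f

theorem IsReparam.of_continuous_of_monotone {f : I → I} (hc : Continuous f) (hm : Monotone f)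
    (h0 : f 0 = 0) (h1 : f 1 = 1) : IsReparam f :=
  ⟨hc, hm, fun y => intermediate_value_univ 0 1 hc <| by
    rw [h0, h1]; exact ⟨nonneg', le_one'⟩⟩

theorem frechetDist_le_of_forall_dist_le {E : Type*} [PseudoMetricSpace E] {P Q : I → E}
    {δ : ℝ} {f g : I → I} (hf : IsReparam f) (hg : IsReparam g)
    (h : ∀ t, dist (P (f t)) (Q (g t)) ≤ δ) : frechetDist P Q ≤ δ :=
  csInf_le ⟨0, fun _ ⟨_, _, _, _, _, _, _, _, hr⟩ => dist_nonneg.trans (hr 0)⟩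
    ⟨f, g, hf.1, hf.2.1, hf.2.2, hg.1, hg.2.1, hg.2.2, h⟩

theorem frechetDist_neg {E : Type*} [SeminormedAddCommGroup E] (P Q : I → E) :
    frechetDist (-P) (-Q) = frechetDist P Q := by
  simp only [frechetDist, Pi.neg_apply, dist_neg_neg]

section ApproxMonotone

variable {c : ℝ} {P : I → ℝ}

theorem ApproxInc.neg (h : ApproxInc c P) : ApproxDec c (-P) := fun s t hst => by
  simp only [Pi.neg_apply]; linarith [h s t hst]

theorem ApproxDec.neg (h : ApproxDec c P) : ApproxInc c (-P) := fun s t hst => by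
  simp only [Pi.neg_apply]; linarith [h s t hst]

theorem ApproxMono.neg (h : ApproxMono c P) : ApproxMono c (-P) :=
  h.symm.imp ApproxDec.neg ApproxInc.neg

theorem ApproxMono.approxInc_of_forall_mem_Icc (h : ApproxMono c P)
    (hP : ∀ t, P t ∈ Icc (P 0) (P 1)) : ApproxInc c P := by
  rcases h with h | h
  · exact h
  · intro s t _
    linarith [h 0 1 nonneg', (hP s).2, (hP t).1]

end ApproxMonotone

def filledGraph {α β : Type*} [Preorder α] [Preorder β] (g : α → β) : Set (α × β) :=
  {p | (∀ u < p.1, g u ≤ p.2) ∧ ∀ u, p.1 < u → p.2 ≤ g u}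

section DiagSweep

/-- `(diagSweep g r, r - diagSweep g r)` is the point where the anti-diagonal `x + y = r` crosses
the filled graph of `g` over `[0,1]`. -/
noncomputable def diagSweep (g : ℝ → ℝ) (r : ℝ) : ℝ :=
  sSup {x ∈ Icc (0 : ℝ) 1 | x + g x ≤ r}

variable {g : ℝ → ℝ} {r r' x : ℝ}

theorem diagSweep_nonneg : 0 ≤ diagSweep g r :=
  Real.sSup_nonneg fun _ hx => hx.1.1

theorem diagSweep_le_one : diagSweep g r ≤ 1 :=
  Real.sSup_le (fun _ hx => hx.1.2) zero_le_one

theorem le_diagSweep (hx : x ∈ Icc (0 : ℝ) 1) (h : x + g x ≤ r) : x ≤ diagSweep g r :=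
  le_csSup ⟨1, fun _ hy => hy.1.2⟩ ⟨hx, h⟩

theorem diagSweep_le_self (hg : ∀ x ∈ Icc (0 : ℝ) 1, 0 ≤ g x) (hr : 0 ≤ r) :
    diagSweep g r ≤ r :=
  Real.sSup_le (fun x hx => by linarith [hg x hx.1, hx.2]) hr

theorem sub_one_le_diagSweep (hg : ∀ x ∈ Icc (0 : ℝ) 1, g x ≤ 1) (hr : r ≤ 2) :
    r - 1 ≤ diagSweep g r := by
  rcases le_total r 1 with h | h
  · linarith [diagSweep_nonneg (g := g) (r := r)]
  · have hmem : r - 1 ∈ Icc (0 : ℝ) 1 := ⟨by linarith, by linarith⟩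
    exact le_diagSweep hmem (by linarith [hg _ hmem])

theorem monotone_diagSweep : Monotone (diagSweep g) := fun _ _ h =>
  Real.sSup_le (fun _ hx => le_diagSweep hx.1 (hx.2.trans h)) diagSweep_nonneg

theorem diagSweep_le_add (hg : MonotoneOn g (Icc 0 1)) (h : r ≤ r') :
    diagSweep g r' ≤ diagSweep g r + (r' - r) := by
  refine Real.sSup_le (fun x hx => ?_) (by linarith [diagSweep_nonneg (g := g) (r := r)])
  rcases le_total x (r' - r) with hxd | hxd
  · linarith [diagSweep_nonneg (g := g) (r := r)]
  · have hmem : x - (r' - r) ∈ Icc (0 : ℝ) 1 := ⟨by linarith, by linarith [hx.1.2]⟩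
    have := hg hmem hx.1 (by linarith)
    linarith [le_diagSweep (g := g) (r := r) hmem (by linarith [hx.2])]

theorem lipschitzWith_diagSweep (hg : MonotoneOn g (Icc 0 1)) : LipschitzWith 1 (diagSweep g) :=
  LipschitzWith.of_le_add fun r r' => by
    rw [Real.dist_eq]
    rcases le_total r r' with h | h
    · linarith [monotone_diagSweep (g := g) h, abs_nonneg (r - r')]
    · linarith [diagSweep_le_add hg h, le_abs_self (r - r')]

theorem monotone_sub_diagSweep (hg : MonotoneOn g (Icc 0 1)) :
    Monotone fun r => r - diagSweep g r := fun _ _ h => by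
  linarith [diagSweep_le_add hg h]

theorem le_sub_diagSweep_of_lt (hg : MonotoneOn g (Icc 0 1)) (hx : x ∈ Icc (0 : ℝ) 1)
    (h : x < diagSweep g r) : g x ≤ r - diagSweep g r := by
  by_contra! hlt
  set ε := g x - (r - diagSweep g r)
  have hne : {x ∈ Icc (0 : ℝ) 1 | x + g x ≤ r}.Nonempty := by
    refine nonempty_iff_ne_empty.2 fun hemp => ?_
    rw [diagSweep, hemp, Real.sSup_empty] at h
    linarith [hx.1]
  obtain ⟨w, hw, hxw⟩ := exists_lt_of_lt_csSup hne
    (max_lt h (by linarith) : max x (diagSweep g r - ε / 2) < _)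
  have := hg hx hw.1 ((le_max_left _ _).trans hxw.le)
  linarith [hw.2, le_max_right x (diagSweep g r - ε / 2)]

theorem sub_diagSweep_le_of_lt (hg : MonotoneOn g (Icc 0 1)) (hx : x ∈ Icc (0 : ℝ) 1)
    (h : diagSweep g r < x) : r - diagSweep g r ≤ g x := by
  by_contra! hlt
  set ε := r - diagSweep g r - g x
  set y := min x (diagSweep g r + ε / 2)
  have hy : y ∈ Icc (0 : ℝ) 1 :=
    ⟨le_min hx.1 (by linarith [diagSweep_nonneg (g := g) (r := r)]),
      (min_le_left _ _).trans hx.2⟩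
  have := hg hy hx (min_le_left _ _)
  have hyr : y + g y ≤ r := by linarith [min_le_right x (diagSweep g r + ε / 2)]
  linarith [le_diagSweep hy hyr, (lt_min h (by linarith) : diagSweep g r < y)]

end DiagSweep

theorem exists_reparam_mem_filledGraph {g : I → I} (hg : Monotone g) :
    ∃ f h : I → I, IsReparam f ∧ IsReparam h ∧ ∀ t, (f t, h t) ∈ filledGraph g := by
  set g' : ℝ → ℝ := fun x => g (projIcc 0 1 zero_le_one x)
  have hg' : MonotoneOn g' (Icc 0 1) := fun a _ b _ hab => hg (monotone_projIcc _ hab)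
  have hg0 : ∀ x ∈ Icc (0 : ℝ) 1, 0 ≤ g' x := fun _ _ => (g _).2.1
  have hg1 : ∀ x ∈ Icc (0 : ℝ) 1, g' x ≤ 1 := fun _ _ => (g _).2.2
  have hdouble : Monotone fun t : I => 2 * (t : ℝ) := fun _ _ h =>
    mul_le_mul_of_nonneg_left (Subtype.coe_le_coe.2 h) zero_le_two
  have hψ : ∀ t : I, diagSweep g' (2 * t) ∈ I := fun _ =>
    ⟨diagSweep_nonneg, diagSweep_le_one⟩
  have hν : ∀ t : I, 2 * (t : ℝ) - diagSweep g' (2 * t) ∈ I := fun t =>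
    ⟨sub_nonneg.2 (diagSweep_le_self hg0 (by linarith [t.2.1])),
      by linarith [sub_one_le_diagSweep hg1 (by linarith [t.2.2] : 2 * (t : ℝ) ≤ 2)]⟩
  have hψ0 : diagSweep g' 0 = 0 := le_antisymm (diagSweep_le_self hg0 le_rfl) diagSweep_nonneg
  have hψ2 : diagSweep g' 2 = 1 :=
    le_antisymm diagSweep_le_one (by linarith [sub_one_le_diagSweep (r := 2) hg1 le_rfl])
  have hcont : Continuous (diagSweep g') := (lipschitzWith_diagSweep hg').continuous
  refine ⟨fun t => ⟨_, hψ t⟩, fun t => ⟨_, hν t⟩, ?_, ?_,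
    fun t => ⟨fun u hu => ?_, fun u hu => ?_⟩⟩
  · refine .of_continuous_of_monotone (by fun_prop) (fun _ _ h => monotone_diagSweep (hdouble h))
      ?_ ?_ <;> ext <;> simp [hψ0, hψ2]
  · refine .of_continuous_of_monotone (by fun_prop)
      (fun _ _ h => monotone_sub_diagSweep hg' (hdouble h)) ?_ ?_ <;> ext <;> norm_num [hψ0, hψ2]
  · exact Subtype.coe_le_coe.1 <| by
      simpa only [g', projIcc_val] using le_sub_diagSweep_of_lt hg' u.2 hu
  · exact Subtype.coe_le_coe.1 <| by
      simpa only [g', projIcc_val] using sub_diagSweep_le_of_lt hg' u.2 hu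

section FutureMin

noncomputable def futureMin (P : I → ℝ) (s : I) : ℝ :=
  ⨅ t, P (max s t)

variable {P : I → ℝ} {s t : I} {c : ℝ}

theorem continuous_futureMin (hP : Continuous P) : Continuous (futureMin P) := by
  refine (isCompact_univ.continuous_sInf (f := fun s t => P (max s t))
    (hP.comp continuous_max)).congr fun s => ?_
  rw [image_univ]
  rfl

theorem bddBelow_range_futureMin (hP : Continuous P) (s : I) :
    BddBelow (range fun t => P (max s t)) :=
  (isCompact_range (by fun_prop)).bddBelow

theorem futureMin_le (hP : Continuous P) (h : s ≤ t) : futureMin P s ≤ P t := by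
  simpa only [futureMin, max_eq_right h] using ciInf_le (bddBelow_range_futureMin hP s) t

theorem le_futureMin (h : ∀ t, s ≤ t → c ≤ P t) : c ≤ futureMin P s :=
  le_ciInf fun _ => h _ le_sup_left

theorem futureMin_mono (hP : Continuous P) : Monotone (futureMin P) := fun _ _ h =>
  le_futureMin fun _ ht => futureMin_le hP (h.trans ht)

theorem ApproxInc.sub_le_futureMin (h : ApproxInc c P) : P s - c ≤ futureMin P s :=
  le_futureMin fun t ht => h s t ht

theorem exists_gt_futureMin_eq (hP : Continuous P) (h : futureMin P s < P s) :
    ∃ u, s < u ∧ futureMin P u = futureMin P s := by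
  obtain ⟨t, ht⟩ := (isCompact_range (f := fun t => P (max s t)) (by fun_prop)).sInf_mem
    (range_nonempty _)
  have hPw : P (max s t) = futureMin P s := ht
  have hsw : s < max s t := (le_max_left s t).lt_of_ne fun hsw => by rw [← hsw] at hPw; linarith
  exact ⟨max s t, hsw, le_antisymm (hPw ▸ futureMin_le hP le_rfl) (futureMin_mono hP hsw.le)⟩

end FutureMin

section FirstHit

noncomputable def firstHit (Q : I → ℝ) (β : ℝ) : I :=
  sInf {v | β ≤ Q v}

variable {Q : I → ℝ} {β : ℝ} {v : I}

theorem monotone_firstHit : Monotone (firstHit Q) := fun _ _ h =>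
  sInf_le_sInf fun _ hv => h.trans hv

theorem map_lt_of_lt_firstHit (h : v < firstHit Q β) : Q v < β :=
  not_le.1 fun hv => (sInf_le (show v ∈ {v | β ≤ Q v} from hv)).not_gt h

theorem le_map_firstHit (hQ : Continuous Q) (h : firstHit Q β < 1) : β ≤ Q (firstHit Q β) := by
  refine IsClosed.sInf_mem (nonempty_iff_ne_empty.2 fun hemp => ?_)
    (isClosed_le continuous_const hQ)
  simp [firstHit, hemp] at h

theorem map_le_of_le_firstHit (hQ : Continuous Q) (hv : 0 < v) (h : v ≤ firstHit Q β) :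
    Q v ≤ β := by
  have hsub : Iio v ⊆ {w | Q w ≤ β} := fun w hw => (map_lt_of_lt_firstHit (hw.trans_le h)).le
  exact (isClosed_le hQ continuous_const).mem_of_Iio_subset ⟨0, hv⟩ hsub

theorem exists_le_le_map_of_forall_firstHit_le (hQ : Continuous Q) {F : I → ℝ}
    (hF : Continuous F) {s : I} (hs : 0 < s) (hv : v < 1) (h : ∀ u < s, firstHit Q (F u) ≤ v) :
    ∃ w ≤ v, F s ≤ Q w := by
  obtain ⟨w, hwv, hmax⟩ := isClosed_Iic.isCompact.exists_isMaxOn nonempty_Iic hQ.continuousOn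
  have hsub : Iio s ⊆ {u | F u ≤ Q w} := fun u hu =>
    (le_map_firstHit hQ ((h u hu).trans_lt hv)).trans (hmax (h u hu))
  exact ⟨w, hwv, (isClosed_le hF continuous_const).mem_of_Iio_subset ⟨0, hs⟩ hsub⟩

end FirstHit

section FreeSpace

noncomputable def matchTime (P Q : I → ℝ) (δ : ℝ) (s : I) : I :=
  firstHit Q (futureMin P s + δ)

variable {P Q : I → ℝ} {δ : ℝ} {s v : I}

theorem monotone_matchTime (hP : Continuous P) : Monotone (matchTime P Q δ) :=
  monotone_firstHit.comp fun _ _ h => (add_le_add_iff_right δ).2 (futureMin_mono hP h)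

theorem map_le_add_of_mem_filledGraph (hP : Continuous P) (hQ : Continuous Q)
    (hQ1 : ∀ t, Q t ≤ Q 1) (h1 : Q 1 ≤ P 1 + δ) (hP0 : ∀ t, Q 0 ≤ P t + δ)
    (hsv : (s, v) ∈ filledGraph (matchTime P Q δ)) : Q v ≤ P s + δ := by
  rcases eq_or_lt_of_le (le_one' : s ≤ 1) with rfl | hs1
  · linarith [hQ1 v]
  rcases eq_or_lt_of_le (nonneg' : 0 ≤ v) with rfl | hv0
  · exact hP0 s
  have hsub : Ioi s ⊆ {u | Q v ≤ futureMin P u + δ} := fun u hu =>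
    map_le_of_le_firstHit hQ hv0 (hsv.2 u hu)
  have hs : Q v ≤ futureMin P s + δ :=
    (isClosed_le continuous_const ((continuous_futureMin hP).add continuous_const))
      |>.mem_of_Ioi_subset ⟨1, hs1⟩ hsub
  linarith [futureMin_le hP (le_refl s)]

theorem sub_le_map_of_mem_filledGraph (hP : Continuous P) (hQ : Continuous Q)
    (hPinc : ApproxInc (2 * δ) P) (hQinc : ApproxInc (2 * δ) Q)
    (hQ0 : ∀ t, Q 0 ≤ Q t) (h0 : P 0 ≤ Q 0 + δ) (hP1 : ∀ t, P t ≤ Q 1 + δ)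
    (hsv : (s, v) ∈ filledGraph (matchTime P Q δ)) : P s - δ ≤ Q v := by
  rcases eq_or_lt_of_le (nonneg' : 0 ≤ s) with rfl | hs0
  · linarith [hQ0 v]
  rcases eq_or_lt_of_le (le_one' : v ≤ 1) with rfl | hv1
  · linarith [hP1 s]
  obtain ⟨w, hwv, hw⟩ := exists_le_le_map_of_forall_firstHit_le hQ
    (F := fun u => futureMin P u + δ) ((continuous_futureMin hP).add continuous_const)
    hs0 hv1 hsv.1
  rcases (futureMin_le hP (le_refl s)).eq_or_lt with hPs | hPs
  · linarith [hQinc w v hwv]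
  -- `futureMin P` is constant just right of `s`, which pins `v` to the first hit of its level.
  obtain ⟨u, hsu, hu⟩ := exists_gt_futureMin_eq hP hPs
  have hvτ : v ≤ firstHit Q (futureMin P s + δ) := by
    simpa only [matchTime, hu] using hsv.2 u hsu
  have hvw : v ≤ w := hvτ.trans (sInf_le hw)
  linarith [le_antisymm hvw hwv ▸ hw, hPinc.sub_le_futureMin (s := s)]

end FreeSpace

theorem frechetDist_le_of_approxInc {δ : ℝ} {P Q : I → ℝ} (hP : Continuous P)
    (hQ : Continuous Q) (hPinc : ApproxInc (2 * δ) P) (hQinc : ApproxInc (2 * δ) Q)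
    (hQr : ∀ t, Q t ∈ Icc (Q 0) (Q 1)) (h0 : |P 0 - Q 0| ≤ δ) (h1 : |P 1 - Q 1| ≤ δ)
    (hrange : ∀ t, ∃ s, |P t - Q s| ≤ δ) : frechetDist P Q ≤ δ := by
  have hPr : ∀ t, Q 0 ≤ P t + δ ∧ P t ≤ Q 1 + δ := fun t => by
    obtain ⟨s, hs⟩ := hrange t
    have := abs_le.1 hs
    constructor <;> linarith [(hQr s).1, (hQr s).2]
  obtain ⟨f, g, hf, hg, hfg⟩ :=
    exists_reparam_mem_filledGraph (monotone_matchTime (Q := Q) (δ := δ) hP)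
  refine frechetDist_le_of_forall_dist_le hf hg fun t => abs_sub_le_iff.2 ⟨?_, ?_⟩
  · linarith [sub_le_map_of_mem_filledGraph hP hQ hPinc hQinc (fun t => (hQr t).1)
      (by linarith [(abs_le.1 h0).2]) (fun t => (hPr t).2) (hfg t)]
  · linarith [map_le_add_of_mem_filledGraph hP hQ (fun t => (hQr t).2)
      (by linarith [(abs_le.1 h1).1]) (fun t => (hPr t).1) (hfg t)]

theorem frechetDist_le_of_approxMonotone_general (δ : ℝ)
    (P Q : unitInterval → ℝ) (hPc : Continuous P) (hQc : Continuous Q)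
    (hQm : ApproxMono (2 * δ) Q)
    (hwrt : (Q 0 ≤ Q 1 ∧ ApproxInc (2 * δ) P) ∨ (Q 1 ≤ Q 0 ∧ ApproxDec (2 * δ) P))
    (h0 : |P 0 - Q 0| ≤ δ) (h1 : |P 1 - Q 1| ≤ δ)
    (hrange : ∀ t : unitInterval, ∃ s : unitInterval, |P t - Q s| ≤ δ)
    (hQrange : ∀ t : unitInterval, Q t ∈ Set.uIcc (Q 0) (Q 1)) :
    frechetDist P Q ≤ δ := by
  rcases hwrt with ⟨hQ01, hPinc⟩ | ⟨hQ10, hPdec⟩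
  · have hQr : ∀ t, Q t ∈ Icc (Q 0) (Q 1) := by simpa only [uIcc_of_le hQ01] using hQrange
    exact frechetDist_le_of_approxInc hPc hQc hPinc (hQm.approxInc_of_forall_mem_Icc hQr) hQr
      h0 h1 hrange
  · have hQr : ∀ t, (-Q) t ∈ Icc ((-Q) 0) ((-Q) 1) := fun t => by
      simpa [uIcc_of_ge hQ10, and_comm] using hQrange t
    have habs : ∀ t s, |(-P) t - (-Q) s| = |P t - Q s| := fun _ _ => by
      rw [Pi.neg_apply, Pi.neg_apply, neg_sub_neg, abs_sub_comm]
    rw [← frechetDist_neg]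
    exact frechetDist_le_of_approxInc hPc.neg hQc.neg hPdec.neg
      (hQm.neg.approxInc_of_forall_mem_Icc hQr) hQr (habs 0 0 ▸ h0) (habs 1 1 ▸ h1)
      fun t => (hrange t).imp fun s hs => habs t s ▸ hs

/-- Two `2δ`-monotone curves `P, Q` with `P` `2δ`-monotone with
respect to the segment from `Q(0)` to `Q(1)`, matching endpoints within `δ`,
`P` within distance `δ` of `Q`, and `Q` range-preserving, have `d_F(P,Q) ≤ δ`. -/
theorem frechetDist_le_of_approxMonotone (δ : ℝ) (hδ : 0 < δ)
    (P Q : unitInterval → ℝ) (hPc : Continuous P) (hQc : Continuous Q)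
    (hPm : ApproxMono (2 * δ) P) (hQm : ApproxMono (2 * δ) Q)
    (hwrt : (Q 0 ≤ Q 1 ∧ ApproxInc (2 * δ) P) ∨ (Q 1 ≤ Q 0 ∧ ApproxDec (2 * δ) P))
    (h0 : |P 0 - Q 0| ≤ δ) (h1 : |P 1 - Q 1| ≤ δ)
    (hrange : ∀ t : unitInterval, ∃ s : unitInterval, |P t - Q s| ≤ δ)
    (hQrange : ∀ t : unitInterval, Q t ∈ Set.uIcc (Q 0) (Q 1)) :
    frechetDist P Q ≤ δ :=
  frechetDist_le_of_approxMonotone_general δ P Q hPc hQc hQm hwrt h0 h1 hrange hQrange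
end
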